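/- arXiv:0810.0069 — 6 statements merged into one kernel-verified Lean document; each statement's English description precedes it below -/
import Mathlib

section
/- Let S be a commutative ring and let a, b ∈ S. If a is not a zero divisor in S, and the image of b in S/aS is not a zero divisor in S/aS, then the image of a in S/bS is not a zero divisor in S/bS. -/
/-! If `a • x = b • y` then `y` is a multiple `a • c` because `b` is regular modulo `a`, and
cancelling `a` gives `x = b • c`. -/

open Pointwise

theorem IsSMulRegular.quotSMulTop_swap {R M : Type*} [CommRing R] [AddCommGroup M] [Module R M]
    {a b : R} (ha : IsSMulRegular M a) (hb : IsSMulRegular (QuotSMulTop a M) b) :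
    IsSMulRegular (QuotSMulTop b M) a := by
  simp only [isSMulRegular_quotient_iff_mem_of_smul_mem, Submodule.mem_smul_pointwise_iff_exists,
    Submodule.mem_top, true_and] at hb ⊢
  rintro x ⟨y, hxy⟩
  obtain ⟨c, rfl⟩ := hb y ⟨x, hxy.symm⟩
  exact ⟨c, ha (show a • b • c = a • x by rw [smul_comm, hxy])⟩

theorem Ideal.span_singleton_eq_smul_top {R : Type*} [CommRing R] (r : R) :
    Ideal.span {r} = r • (⊤ : Ideal R) := by
  rw [← Submodule.ideal_span_singleton_smul, smul_eq_mul, Ideal.mul_top]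

theorem isSMulRegular_quotSMulTop_self_iff {R : Type*} [CommRing R] (r s : R) :
    IsSMulRegular (QuotSMulTop r R) s ↔
      ∀ y : R ⧸ Ideal.span {r}, Ideal.Quotient.mk (Ideal.span {r}) s * y = 0 → y = 0 := by
  rw [isSMulRegular_quotient_iff_mem_of_smul_mem, ← Ideal.span_singleton_eq_smul_top,
    ← isSMulRegular_quotient_iff_mem_of_smul_mem]
  exact isSMulRegular_iff_right_eq_zero_of_smul

theorem stmt_0 {S : Type*} [CommRing S] (a b : S)
    (ha : ∀ x : S, a * x = 0 → x = 0)
    (hb : ∀ y : S ⧸ Ideal.span ({a} : Set S),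
      (Ideal.Quotient.mk (Ideal.span ({a} : Set S)) b) * y = 0 → y = 0) :
    ∀ z : S ⧸ Ideal.span ({b} : Set S),
      (Ideal.Quotient.mk (Ideal.span ({b} : Set S)) a) * z = 0 → z = 0 :=
  (isSMulRegular_quotSMulTop_self_iff b a).mp <|
    (isSMulRegular_iff_right_eq_zero_of_smul.mpr ha).quotSMulTop_swap <|
      (isSMulRegular_quotSMulTop_self_iff a b).mpr hb
end

section
/- Let A be an associative unital algebra over a commutative ring R, δ ∈ R, and let X ∈ A be invertible, Y ∈ A invertible, e ∈ A, with X − X⁻¹ = δ(1 − e). Set Y′ := XYX. Then for every integer p ≥ 0: X Y^p = Y′^p X − δ Σ_{s=1}^{p} Y′^s Y^{p−s} + δ Σ_{s=1}^{p} Y′^s e Y^{p−s}. -/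
/-!
The skein relation says `X⁻¹ = X - δ(1 - e)`, so `X Y = Y' X⁻¹ = Y' (X - δ(1 - e))`. Moving `X`
past the `p` factors of `Y ^ p` one at a time, the `s`-th crossing leaves the correction term
`Y'^s δ(1 - e) Y^(p-s)`.
-/

open Finset

theorem mul_pow_eq_of_mul_eq_mul_sub {A : Type*} [Ring A] {a b c d : A}
    (h : a * b = c * (a - d)) (p : ℕ) :
    a * b ^ p = c ^ p * a - ∑ s ∈ Icc 1 p, c ^ s * d * b ^ (p - s) := by
  induction p with
  | zero => simp
  | succ p ih =>
    have shift : ∀ s ∈ Icc 1 p, c ^ s * d * b ^ (p + 1 - s) = c ^ s * d * b ^ (p - s) * b := by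
      intro s hs
      rw [Nat.sub_add_comm (mem_Icc.mp hs).2, pow_succ, mul_assoc (c ^ s * d)]
    calc a * b ^ (p + 1)
        = (c ^ p * a - ∑ s ∈ Icc 1 p, c ^ s * d * b ^ (p - s)) * b := by
          rw [pow_succ, ← mul_assoc, ih]
      _ = c ^ (p + 1) * a - ∑ s ∈ Icc 1 (p + 1), c ^ s * d * b ^ (p + 1 - s) := by
          rw [sum_Icc_succ_top (by omega), sum_congr rfl shift, ← sum_mul, sub_mul,
            mul_assoc, h, Nat.sub_self, pow_zero, mul_one, pow_succ]
          noncomm_ring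

theorem stmt_5 {R A : Type*} [CommRing R] [Ring A] [Algebra R A]
    (δ : R) (X Y : Aˣ) (e : A)
    (hskein : (X : A) - (↑X⁻¹ : A) = δ • ((1 : A) - e))
    (Y' : A) (hY' : Y' = (X : A) * (Y : A) * (X : A)) :
    ∀ p : ℕ,
      (X : A) * (Y : A) ^ p =
        Y' ^ p * (X : A)
          - δ • ∑ s ∈ Finset.Icc 1 p, Y' ^ s * (Y : A) ^ (p - s)
          + δ • ∑ s ∈ Finset.Icc 1 p, Y' ^ s * e * (Y : A) ^ (p - s) := by
  have hXY : (X : A) * Y = Y' * (X - δ • (1 - e)) := by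
    rw [← hskein, sub_sub_cancel, hY', mul_assoc _ (X : A), Units.mul_inv, mul_one]
  intro p
  rw [mul_pow_eq_of_mul_eq_mul_sub hXY p, sub_add, ← smul_sub, ← sum_sub_distrib, smul_sum]
  congr 1
  refine sum_congr rfl fun s _ => ?_
  rw [mul_smul_comm, smul_mul_assoc, mul_sub, mul_one, sub_mul]
end

section
/- Let A be an associative unital algebra over a commutative ring R, let k ≥ 1, let q₀, …, q_{k-1} ∈ R with q₀ invertible, and let A₀, …, A_{k-1} ∈ R. Suppose y ∈ A is invertible with y^k = Σ_{i=0}^{k-1} q_i y^i, and e ∈ A satisfies e y^m e = A_m e for all 0 ≤ m ≤ k−1. Then for every integer p (positive or negative) there exists a scalar A_p ∈ R such that e y^p e = A_p e. -/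
/-!
The powers `y ^ p`, `p : ℤ`, all lie in the `R`-span `S` of `1, y, …, y ^ (k - 1)`: the cyclotomic
relation makes `S` stable under left multiplication by `y`, and since its constant term `q 0` is a
unit it can be solved for `y⁻¹ = (q 0)⁻¹ (y ^ (k - 1) - ∑_{0 < i < k} q i y ^ (i - 1)) ∈ S`, which
makes `S` stable under `y⁻¹` as well. The elements `x` with `e x e ∈ R e` form a submodule
containing the generators of `S`, so they contain every `y ^ p`.
-/

section PowSpan

variable (R : Type*) {A : Type*} [CommSemiring R] [Semiring A] [Algebra R A]

def powSpan (y : A) (k : ℕ) : Submodule R A :=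
  Submodule.span R ((y ^ ·) '' Set.Iio k)

variable {R}

theorem powSpan_le_iff {y : A} {k : ℕ} {S : Submodule R A} :
    powSpan R y k ≤ S ↔ ∀ i < k, y ^ i ∈ S := by
  simp [powSpan, Submodule.span_le, Set.subset_def]

theorem pow_mem_powSpan {y : A} {k i : ℕ} (hi : i < k) : y ^ i ∈ powSpan R y k :=
  Submodule.subset_span ⟨i, hi, rfl⟩

theorem mul_mem_powSpan {y : A} {k : ℕ} {q : ℕ → R}
    (hy : y ^ k = ∑ i ∈ Finset.range k, q i • y ^ i) {x : A} (hx : x ∈ powSpan R y k) :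
    y * x ∈ powSpan R y k := by
  suffices powSpan R y k ≤ (powSpan R y k).comap (LinearMap.mulLeft R y) from this hx
  refine powSpan_le_iff.mpr fun i hi => ?_
  change y * y ^ i ∈ powSpan R y k
  rw [← pow_succ']
  rcases (Nat.succ_le_of_lt hi).lt_or_eq with hlt | rfl
  · exact pow_mem_powSpan hlt
  · rw [hy]
    exact Submodule.sum_mem _ fun j hj =>
      Submodule.smul_mem _ _ (pow_mem_powSpan (Finset.mem_range.mp hj))

end PowSpan

section Inverse

variable {R A : Type*} [CommRing R] [Ring A] [Algebra R A]

theorem inv_mem_powSpan {y : Aˣ} {n : ℕ} {q : ℕ → R} (hq : IsUnit (q 0))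
    (hy : (y : A) ^ (n + 1) = ∑ i ∈ Finset.range (n + 1), q i • (y : A) ^ i) :
    (↑y⁻¹ : A) ∈ powSpan R (y : A) (n + 1) := by
  have hinv : q 0 • (↑y⁻¹ : A) = (y : A) ^ n - ∑ i ∈ Finset.range n, q (i + 1) • (y : A) ^ i := by
    have h := congrArg ((↑y⁻¹ : A) * ·) hy
    simp only [Finset.sum_range_succ', mul_add, Finset.mul_sum, mul_smul_comm, pow_succ',
      ← mul_assoc, Units.inv_mul, one_mul, pow_zero, mul_one] at h
    rw [h, add_sub_cancel_left]
  obtain ⟨c, hc⟩ := hq.exists_left_inv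
  rw [← one_smul R (↑y⁻¹ : A), ← hc, mul_smul, hinv]
  refine Submodule.smul_mem _ _ (Submodule.sub_mem _ (pow_mem_powSpan n.lt_succ_self) ?_)
  exact Submodule.sum_mem _ fun i hi =>
    Submodule.smul_mem _ _ (pow_mem_powSpan (Nat.lt_succ_of_lt (Finset.mem_range.mp hi)))

theorem inv_mul_mem_powSpan {y : Aˣ} {n : ℕ} {q : ℕ → R} (hq : IsUnit (q 0))
    (hy : (y : A) ^ (n + 1) = ∑ i ∈ Finset.range (n + 1), q i • (y : A) ^ i) {x : A}
    (hx : x ∈ powSpan R (y : A) (n + 1)) : (↑y⁻¹ : A) * x ∈ powSpan R (y : A) (n + 1) := by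
  suffices powSpan R (y : A) (n + 1) ≤
      (powSpan R (y : A) (n + 1)).comap (LinearMap.mulLeft R (↑y⁻¹ : A)) from this hx
  refine powSpan_le_iff.mpr fun i hi => ?_
  rcases i with _ | i
  · simpa using inv_mem_powSpan hq hy
  · change (↑y⁻¹ : A) * (y : A) ^ (i + 1) ∈ powSpan R (y : A) (n + 1)
    rw [pow_succ', ← mul_assoc, Units.inv_mul, one_mul]
    exact pow_mem_powSpan (Nat.lt_of_succ_lt hi)

end Inverse

theorem Units.zpow_mem_of_mul_mem {R A : Type*} [Semiring R] [Semiring A] [Module R A]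
    {S : Submodule R A} {y : Aˣ} (h1 : 1 ∈ S) (hmul : ∀ x ∈ S, (y : A) * x ∈ S)
    (hinv : ∀ x ∈ S, (↑y⁻¹ : A) * x ∈ S) (p : ℤ) : (↑(y ^ p) : A) ∈ S := by
  induction p using Int.induction_on with
  | zero => simpa using h1
  | succ n ih =>
    rw [add_comm, zpow_one_add, Units.val_mul]
    exact hmul _ ih
  | pred n ih =>
    rw [sub_eq_neg_add, zpow_add, zpow_neg_one, Units.val_mul]
    exact hinv _ ih

def sandwichSubmodule (R : Type*) {A : Type*} [CommSemiring R] [Semiring A] [Algebra R A]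
    (e : A) : Submodule R A where
  carrier := {x | ∃ c : R, e * x * e = c • e}
  zero_mem' := ⟨0, by simp⟩
  add_mem' := by
    rintro a b ⟨c, hc⟩ ⟨d, hd⟩
    exact ⟨c + d, by rw [mul_add, add_mul, hc, hd, add_smul]⟩
  smul_mem' := by
    rintro r a ⟨c, hc⟩
    exact ⟨r * c, by rw [mul_smul_comm, smul_mul_assoc, hc, smul_smul]⟩

theorem stmt_6 {R A : Type*} [CommRing R] [Ring A] [Algebra R A]
    (k : ℕ) (hk : 1 ≤ k) (q : ℕ → R) (u : Rˣ) (hu : (u : R) = q 0)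
    (Acoef : ℕ → R) (y : Aˣ) (e : A)
    (hy : (y : A) ^ k = ∑ i ∈ Finset.range k, q i • (y : A) ^ i)
    (he : ∀ m : ℕ, m < k → e * (y : A) ^ m * e = Acoef m • e) :
    ∀ p : ℤ, ∃ c : R, e * (↑(y ^ p) : A) * e = c • e := by
  obtain ⟨n, rfl⟩ : ∃ n, k = n + 1 := ⟨k - 1, by omega⟩
  have hq : IsUnit (q 0) := hu ▸ u.isUnit
  have hsandwich : powSpan R (y : A) (n + 1) ≤ sandwichSubmodule R e :=
    powSpan_le_iff.mpr fun m hm => ⟨Acoef m, he m hm⟩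
  intro p
  refine hsandwich (Units.zpow_mem_of_mul_mem ?_ (fun _ => mul_mem_powSpan hy)
    (fun _ => inv_mul_mem_powSpan hq hy) p)
  simpa using pow_mem_powSpan (y := (y : A)) n.succ_pos
end

section
/- Let R be a commutative ring, V an R-module, Y an invertible R-linear endomorphism of V, and N an R-linear endomorphism of V. Fix v₀ ∈ V and set v_s := Y^s v₀ for all s ∈ ℤ. Assume: N v₀ = N v₁ = 0, the image of the commutator [N, Y] = NY − YN is contained in R·v₁, and the image of [N, Y⁻¹] is contained in R·v₀. Then for all l ≥ 1, N v_l lies in the R-span of {v₁, v₂, …, v_{l−1}}, and for all m ≥ 0, N v_{−m} lies in the R-span of {v₀, v_{−1}, …, v_{−(m−1)}}. -/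
/-!
Both halves are the same statement about an orbit `x, T x, T² x, …` with `N x = 0` and
`im [N, T] ⊆ R ∙ x`: from `N (T z) = T (N z) + [N, T] z`, induction on `n` puts `N (Tⁿ x)` in the
span of `x, T x, …, Tⁿ⁻¹ x`. Take `T = Y`, `x = v₁` for the positive indices and `T = Y⁻¹`,
`x = v₀` for the negative ones.
-/

open Submodule

section

variable {R V : Type*} [CommRing R] [AddCommGroup V] [Module R V]

theorem Module.End.apply_pow_apply_mem_span_pow_apply_lt (T N : Module.End R V) {x : V}
    (hNx : N x = 0) (hcomm : LinearMap.range (N * T - T * N) ≤ R ∙ x) (n : ℕ) :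
    N ((T ^ n) x) ∈ span R ((fun i ↦ (T ^ i) x) '' Set.Iio n) := by
  have hshift (i : ℕ) : (T ^ (i + 1)) x = T ((T ^ i) x) := by
    rw [pow_succ', Module.End.mul_apply]
  induction n with
  | zero => simp [hNx]
  | succ n ih =>
    have hsplit : N (T ((T ^ n) x)) = T (N ((T ^ n) x)) + (N * T - T * N) ((T ^ n) x) := by
      simp
    rw [hshift, hsplit]
    refine add_mem ?_ (span_mono ?_ (hcomm ⟨_, rfl⟩))
    · have hmap : (span R ((fun i ↦ (T ^ i) x) '' Set.Iio n)).map T ≤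
          span R ((fun i ↦ (T ^ i) x) '' Set.Iio (n + 1)) := by
        rw [map_span, span_le]
        rintro _ ⟨_, ⟨i, hi, rfl⟩, rfl⟩
        exact subset_span ⟨i + 1, by simpa using hi, hshift i⟩
      exact hmap (mem_map_of_mem ih)
    · exact Set.singleton_subset_iff.mpr ⟨0, Nat.succ_pos n, by simp⟩

end

theorem stmt_14 {R V : Type*} [CommRing R] [AddCommGroup V] [Module R V]
    (Y : (Module.End R V)ˣ) (N : Module.End R V) (v0 : V)
    (v : ℤ → V) (hv : ∀ s : ℤ, v s = (↑(Y ^ s) : Module.End R V) v0)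
    (h0 : N (v 0) = 0) (h1 : N (v 1) = 0)
    (hY : ∀ x : V, ∃ c : R, (N * (↑Y : Module.End R V) - (↑Y : Module.End R V) * N) x = c • v 1)
    (hYinv : ∀ x : V, ∃ c : R,
      (N * (↑Y⁻¹ : Module.End R V) - (↑Y⁻¹ : Module.End R V) * N) x = c • v 0) :
    (∀ l : ℤ, 1 ≤ l →
      N (v l) ∈ Submodule.span R {x : V | ∃ s : ℤ, 1 ≤ s ∧ s ≤ l - 1 ∧ x = v s}) ∧
    (∀ m : ℤ, 0 ≤ m →
      N (v (-m)) ∈ Submodule.span R {x : V | ∃ s : ℤ, 0 ≤ s ∧ s ≤ m - 1 ∧ x = v (-s)}) := by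
  have range_le {T : Module.End R V} {w : V} (h : ∀ x, ∃ c : R, (N * T - T * N) x = c • w) :
      LinearMap.range (N * T - T * N) ≤ R ∙ w := by
    rintro _ ⟨x, rfl⟩
    obtain ⟨c, hc⟩ := h x
    exact hc ▸ smul_mem _ c (mem_span_singleton_self w)
  have v_pos (k : ℕ) : v (k + 1) = ((Y : Module.End R V) ^ k) (v 1) := by
    rw [hv, hv, zpow_add, zpow_natCast, Units.val_mul, Units.val_pow_eq_pow_val,
      Module.End.mul_apply]
  have v_neg (k : ℕ) : v (-k) = ((↑Y⁻¹ : Module.End R V) ^ k) (v 0) := by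
    rw [hv, hv, zpow_neg, zpow_natCast, zpow_zero, Units.val_one, Module.End.one_apply, ← inv_pow,
      Units.val_pow_eq_pow_val]
  constructor
  · intro l hl
    obtain ⟨k, rfl⟩ : ∃ k : ℕ, l = k + 1 := ⟨(l - 1).toNat, by omega⟩
    rw [v_pos]
    refine span_mono ?_ ((Y : Module.End R V).apply_pow_apply_mem_span_pow_apply_lt N h1
      (range_le hY) k)
    rintro _ ⟨i, hi, rfl⟩
    exact ⟨i + 1, by omega, by rw [Set.mem_Iio] at hi; omega, (v_pos i).symm⟩
  · intro m hm
    obtain ⟨k, rfl⟩ : ∃ k : ℕ, m = k := ⟨m.toNat, by omega⟩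
    rw [v_neg]
    refine span_mono ?_ ((↑Y⁻¹ : Module.End R V).apply_pow_apply_mem_span_pow_apply_lt N h0
      (range_le hYinv) k)
    rintro _ ⟨i, hi, rfl⟩
    exact ⟨i, by omega, by rw [Set.mem_Iio] at hi; omega, (v_neg i).symm⟩
end

section
/- Let R be a commutative ring, V an R-module, Y an invertible R-linear endomorphism of V, and N an R-linear endomorphism of V. Fix v₀ ∈ V, set v_s := Y^s v₀ for s ∈ ℤ, and fix k ≥ 2. Assume: (a) N v₀ = N v₁ = 0; (b) im([N, Y]) ⊆ R·v₁ and im([N, Y⁻¹]) ⊆ R·v₀; (c) for every integer l, the family (v_l, v_{l+1}, …, v_{l+k−1}) is a basis of V. Then N v_i = 0 for all 0 ≤ i ≤ k−1; consequently N = 0. -/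
/-!
Write `N v_{s+1} = c_s v_1 + Y (N v_s)` (the commutator condition for `Y`). From
`N v_0 = N v_1 = 0` this unrolls to `N v_s = ∑_{j=1}^{s-1} c_j v_{s-j}`. Let `φ` be the
coordinate functional of `v_{k-1}` in the basis `v_0, …, v_{k-1}`. If `c_j = 0` for `1 ≤ j < m`,
then `φ ∘ N` vanishes on `v_{m-1}, …, v_{m+k-2}`, a basis, so `φ ∘ N = 0`; but
`φ (N v_{m+k-1}) = c_m`. Hence all `c_m` vanish, `N v_s = 0` for every `s ≥ 0`, and `N = 0`.
-/

open Finset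

section

variable {R V : Type*} [CommRing R] [AddCommGroup V] [Module R V]

theorem Units.zpow_add_one_apply (Y : (Module.End R V)ˣ) (s : ℤ) (x : V) :
    (↑(Y ^ (s + 1)) : Module.End R V) x = (Y : Module.End R V) ((↑(Y ^ s) : Module.End R V) x) := by
  rw [add_comm, zpow_add, zpow_one, Units.val_mul, Module.End.mul_apply]

theorem apply_eq_sum_of_apply_succ {Y N : Module.End R V} {u : ℕ → V} {c : ℕ → R}
    (hu : ∀ s, u (s + 1) = Y (u s)) (h0 : N (u 0) = 0) (h1 : N (u 1) = 0)
    (hc : ∀ s, N (u (s + 1)) = c s • u 1 + Y (N (u s))) (s : ℕ) :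
    N (u s) = ∑ j ∈ Ico 1 s, c j • u (s - j) := by
  rcases Nat.eq_zero_or_pos s with rfl | hs
  · simpa using h0
  induction s, hs using Nat.le_induction with
  | base => simpa using h1
  | succ s hs ih =>
    have hshift : ∀ j ∈ Ico 1 s, Y (c j • u (s - j)) = c j • u (s + 1 - j) := by
      intro j hj
      rw [map_smul, ← hu, Nat.sub_add_comm (mem_Ico.1 hj).2.le]
    rw [hc, ih, map_sum, sum_congr rfl hshift, sum_Ico_succ_top hs, Nat.add_sub_cancel_left,
      add_comm]

theorem exists_coord_eq_ite {k : ℕ} {u : ℕ → V} (hli : LinearIndependent R fun i : Fin k => u i)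
    (hspan : Submodule.span R (Set.range fun i : Fin k => u i) = ⊤) {i₀ : ℕ}
    (hi₀ : i₀ < k) : ∃ φ : V →ₗ[R] R, ∀ t < k, φ (u t) = if t = i₀ then 1 else 0 := by
  let b := Module.Basis.mk hli hspan.ge
  refine ⟨b.coord ⟨i₀, hi₀⟩, fun t ht => ?_⟩
  have hbt : b ⟨t, ht⟩ = u t := Module.Basis.mk_apply hli hspan.ge _
  rw [← hbt, Module.Basis.coord_apply, Module.Basis.repr_self, Finsupp.single_apply]
  simp only [Fin.mk.injEq, eq_comm]

theorem coord_sum_eq_ite {k m t : ℕ} (hk : 2 ≤ k) {u : ℕ → V} {c : ℕ → R} {φ : V →ₗ[R] R}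
    (hφ : ∀ t < k, φ (u t) = if t = k - 1 then 1 else 0)
    (hcm : ∀ j, 1 ≤ j → j < m → c j = 0) (hm : 1 ≤ m) (ht : t ≤ m + k - 1) :
    φ (∑ j ∈ Ico 1 t, c j • u (t - j)) = if t = m + k - 1 then c m else 0 := by
  have hterm : ∀ j ∈ Ico 1 t, φ (c j • u (t - j)) = if t + 1 - k = j then c j else 0 := by
    intro j hj
    obtain ⟨hj1, hjt⟩ := mem_Ico.1 hj
    rw [map_smul, smul_eq_mul]
    rcases lt_or_ge j m with hjm | hjm
    · simp [hcm j hj1 hjm]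
    · rw [hφ _ (by omega)]
      split_ifs <;> first | omega | simp
  rw [map_sum, sum_congr rfl hterm, sum_ite_eq]
  split_ifs with hmem hlast hlast
  · rw [hlast]; congr 1; omega
  · rw [mem_Ico] at hmem
    exact hcm _ hmem.1 (by omega)
  · rw [mem_Ico] at hmem
    omega
  · rfl

theorem coeff_eq_zero_of_apply_eq_sum {k : ℕ} (hk : 2 ≤ k) {N : Module.End R V} {u : ℕ → V}
    {c : ℕ → R} {φ : V →ₗ[R] R} (hφ : ∀ t < k, φ (u t) = if t = k - 1 then 1 else 0)
    (hspan : ∀ l : ℕ, Submodule.span R (Set.range fun i : Fin k => u (l + i)) = ⊤)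
    (hN : ∀ s, N (u s) = ∑ j ∈ Ico 1 s, c j • u (s - j)) {m : ℕ} (hm : 1 ≤ m) : c m = 0 := by
  induction m using Nat.strong_induction_on with
  | _ m ih =>
  have hcm : ∀ j, 1 ≤ j → j < m → c j = 0 := fun j hj hjm => ih j hjm hj
  have hcoord : ∀ t ≤ m + k - 1, φ (N (u t)) = if t = m + k - 1 then c m else 0 := fun t ht => by
    rw [hN t, coord_sum_eq_ite hk hφ hcm hm ht]
  have hφN : φ ∘ₗ N = 0 := by
    refine LinearMap.ext_on_range (hspan (m - 1)) fun i => ?_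
    rw [LinearMap.comp_apply, hcoord _ (by omega), if_neg (by omega), LinearMap.zero_apply]
  have hlast := hcoord (m + k - 1) le_rfl
  rw [if_pos rfl, ← LinearMap.comp_apply, hφN, LinearMap.zero_apply] at hlast
  exact hlast.symm

end

theorem stmt_15_general {R V : Type*} [CommRing R] [AddCommGroup V] [Module R V]
    (Y : (Module.End R V)ˣ) (N : Module.End R V) (v0 : V) (k : ℕ) (hk : 2 ≤ k)
    (v : ℤ → V) (hv : ∀ s : ℤ, v s = (↑(Y ^ s) : Module.End R V) v0)
    (h0 : N (v 0) = 0) (h1 : N (v 1) = 0)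
    (hY : ∀ x : V, ∃ c : R, (N * (↑Y : Module.End R V) - (↑Y : Module.End R V) * N) x = c • v 1)
    (hbasis : ∀ l : ℤ,
      LinearIndependent R (fun i : Fin k => v (l + (i : ℤ))) ∧
      Submodule.span R (Set.range (fun i : Fin k => v (l + (i : ℤ)))) = ⊤) :
    (∀ i : ℕ, i < k → N (v (i : ℤ)) = 0) ∧ N = 0 := by
  set u : ℕ → V := fun n => v n with hu_def
  have hu : ∀ s, u (s + 1) = (Y : Module.End R V) (u s) := fun s => by
    simp only [hu_def, hv, Nat.cast_succ, Units.zpow_add_one_apply]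
  have hstep : ∀ s, ∃ c : R, N (u (s + 1)) = c • u 1 + (Y : Module.End R V) (N (u s)) := fun s => by
    obtain ⟨c, hc⟩ := hY (u s)
    rw [LinearMap.sub_apply, Module.End.mul_apply, Module.End.mul_apply, ← hu] at hc
    exact ⟨c, eq_add_of_sub_eq hc⟩
  choose c hc using hstep
  have hN := apply_eq_sum_of_apply_succ hu h0 h1 hc
  have hspan : ∀ l : ℕ, Submodule.span R (Set.range fun i : Fin k => u (l + i)) = ⊤ := fun l => by
    simpa [hu_def] using (hbasis l).2
  have hspan0 : Submodule.span R (Set.range fun i : Fin k => u i) = ⊤ := by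
    simpa using hspan 0
  obtain ⟨φ, hφ⟩ := exists_coord_eq_ite (u := u) (by simpa using (hbasis 0).1) hspan0
    (show k - 1 < k by omega)
  have hNu : ∀ t, N (u t) = 0 := fun t => by
    rw [hN t]
    refine sum_eq_zero fun j hj => ?_
    rw [coeff_eq_zero_of_apply_eq_sum hk hφ hspan hN (mem_Ico.1 hj).1, zero_smul]
  exact ⟨fun i _ => hNu i, LinearMap.ext_on_range hspan0 fun i => hNu i⟩

theorem stmt_15 {R V : Type*} [CommRing R] [AddCommGroup V] [Module R V]
    (Y : (Module.End R V)ˣ) (N : Module.End R V) (v0 : V) (k : ℕ) (hk : 2 ≤ k)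
    (v : ℤ → V) (hv : ∀ s : ℤ, v s = (↑(Y ^ s) : Module.End R V) v0)
    (h0 : N (v 0) = 0) (h1 : N (v 1) = 0)
    (hY : ∀ x : V, ∃ c : R, (N * (↑Y : Module.End R V) - (↑Y : Module.End R V) * N) x = c • v 1)
    (hYinv : ∀ x : V, ∃ c : R,
      (N * (↑Y⁻¹ : Module.End R V) - (↑Y⁻¹ : Module.End R V) * N) x = c • v 0)
    (hbasis : ∀ l : ℤ,
      LinearIndependent R (fun i : Fin k => v (l + (i : ℤ))) ∧
      Submodule.span R (Set.range (fun i : Fin k => v (l + (i : ℤ)))) = ⊤) :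
    (∀ i : ℕ, i < k → N (v (i : ℤ)) = 0) ∧ N = 0 :=
  stmt_15_general Y N v0 k hk v hv h0 h1 hY hbasis
end

section
/- Let A be an associative unital algebra over a commutative ring R with δ ∈ R, let X, Y ∈ A be invertible, e ∈ A, with X − X⁻¹ = δ(1 − e), and set Y′ := XYX. Then for all integers p ≥ 0: X Y^{−p} = Y′^{−p} X + δ Σ_{s=1}^{p} Y′^{s−p} Y^{−s} − δ Σ_{s=1}^{p} Y′^{s−p} e Y^{−s}. -/
/-!
The skein relation says `X = X⁻¹ + δ(1 - e)`, and `Y'⁻¹ X = X⁻¹ Y⁻¹`; together they give the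
single commutation rule `X Y⁻¹ = Y'⁻¹ X + δ(1 - e) Y⁻¹`. Pushing `X` through `Y⁻ᵖ` one factor at a
time with this rule leaves one correction term per factor, which is the sum in the statement.
-/

open Finset

theorem mul_pow_eq_of_mul_eq_add {M : Type*} [Semiring M] {a b c d : M}
    (h : a * b = c * a + d * b) (n : ℕ) :
    a * b ^ n = c ^ n * a + ∑ s ∈ Icc 1 n, c ^ (n - s) * d * b ^ s := by
  induction n with
  | zero => simp
  | succ n ih =>
    have hsum : ∑ s ∈ Icc 1 n, c ^ (n + 1 - s) * d * b ^ s
        = c * ∑ s ∈ Icc 1 n, c ^ (n - s) * d * b ^ s := by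
      rw [mul_sum]
      refine sum_congr rfl fun s hs => ?_
      rw [Nat.sub_add_comm (mem_Icc.mp hs).2, pow_succ', mul_assoc, mul_assoc, mul_assoc]
    calc a * b ^ (n + 1) = (c * a + d * b) * b ^ n := by rw [pow_succ', ← mul_assoc, h]
      _ = c * (a * b ^ n) + d * b ^ (n + 1) := by
        rw [add_mul, mul_assoc, mul_assoc, pow_succ' b]
      _ = c ^ (n + 1) * a + ∑ s ∈ Icc 1 (n + 1), c ^ (n + 1 - s) * d * b ^ s := by
        rw [sum_Icc_succ_top (by omega), hsum, ih, Nat.sub_self, pow_zero, one_mul, mul_add,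
          pow_succ' c n, mul_assoc, add_assoc]

theorem Units.val_zpow_natCast_sub {A : Type*} [Monoid A] (u : Aˣ) {s p : ℕ} (h : s ≤ p) :
    (↑(u ^ ((s : ℤ) - p)) : A) = (↑u⁻¹ : A) ^ (p - s) := by
  rw [show (s : ℤ) - p = -((p - s : ℕ) : ℤ) by omega, zpow_neg, zpow_natCast, ← inv_pow,
    Units.val_pow_eq_pow_val]

theorem Units.val_zpow_neg_natCast {A : Type*} [Monoid A] (u : Aˣ) (p : ℕ) :
    (↑(u ^ (-(p : ℤ))) : A) = (↑u⁻¹ : A) ^ p := by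
  rw [zpow_neg, zpow_natCast, ← inv_pow, Units.val_pow_eq_pow_val]

theorem Units.val_mul_inv_eq_of_val_sub_inv {A : Type*} [Ring A] {X : Aˣ} {d : A}
    (h : (X : A) - ↑X⁻¹ = d) (Y : Aˣ) :
    (X : A) * ↑Y⁻¹ = ↑(X * Y * X)⁻¹ * X + d * ↑Y⁻¹ := by
  have hconj : (↑(X * Y * X)⁻¹ : A) * X = ↑X⁻¹ * ↑Y⁻¹ := by
    rw [← Units.val_mul, ← Units.val_mul]
    congr 1
    group
  rw [hconj, ← h, ← add_mul]
  abel_nf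

theorem stmt_17 {R A : Type*} [CommRing R] [Ring A] [Algebra R A]
    (δ : R) (X Y : Aˣ) (e : A)
    (hskein : (X : A) - (↑X⁻¹ : A) = δ • ((1 : A) - e))
    (Y' : Aˣ) (hY' : Y' = X * Y * X) :
    ∀ p : ℕ,
      (X : A) * (↑(Y ^ (-(p : ℤ))) : A) =
        (↑(Y' ^ (-(p : ℤ))) : A) * (X : A)
          + δ • ∑ s ∈ Finset.Icc 1 p,
              (↑(Y' ^ ((s : ℤ) - (p : ℤ))) : A) * (↑(Y ^ (-(s : ℤ))) : A)
          - δ • ∑ s ∈ Finset.Icc 1 p,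
              (↑(Y' ^ ((s : ℤ) - (p : ℤ))) : A) * e * (↑(Y ^ (-(s : ℤ))) : A) := by
  intro p
  subst hY'
  have hpow := mul_pow_eq_of_mul_eq_add (Units.val_mul_inv_eq_of_val_sub_inv hskein Y) p
  simp only [Units.val_zpow_neg_natCast, hpow, add_sub_assoc, smul_sum, ← sum_sub_distrib]
  congr 1
  refine sum_congr rfl fun s hs => ?_
  rw [Units.val_zpow_natCast_sub _ (mem_Icc.mp hs).2, ← smul_sub, mul_smul_comm, smul_mul_assoc,
    mul_sub, mul_one, sub_mul]
end
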